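/- Let (U,F,t) be a Set Cover instance in which every element belongs to exactly d ≥ 3 sets. Then there exists X ⊆ F with |X| ≤ t and ∪_{S∈X} S = U if and only if the depth-2 gerrymandering instance constructed from (U,F,t) admits a district-partition into k = t+3 districts that is satisfying for the preferred candidate p. -/

import Mathlib

attribute [local instance] Classical.propDecidable

/-- Candidate `c` *leads* district `D` (unweighted): `c`'s vote count is at least that of
every candidate. -/
def leadsIn {V C : Type*} (χ : V → C) (c : C) (D : Finset V) : Prop :=
  ∀ c' : C, (D.filter fun x => χ x = c').card ≤ (D.filter fun x => χ x = c).card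

/-- Candidate `c` *wins* district `D` (unweighted): `c`'s vote count strictly exceeds that of
every other candidate. -/
def winsIn {V C : Type*} (χ : V → C) (c : C) (D : Finset V) : Prop :=
  ∀ c' : C, c' ≠ c → (D.filter fun x => χ x = c').card < (D.filter fun x => χ x = c).card

/-- A district-partition of `G` into `k` districts: `k` pairwise-disjoint nonempty vertex sets
covering all vertices, each inducing a connected subgraph. -/
def IsDistrictPartition {V : Type*} (G : SimpleGraph V) (k : ℕ) (P : Finset (Finset V)) : Prop :=
  P.card = k ∧ (∀ D ∈ P, D.Nonempty) ∧
    (∀ D ∈ P, ∀ D' ∈ P, D ≠ D' → Disjoint D D') ∧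
    (∀ x : V, ∃ D ∈ P, x ∈ D) ∧
    (∀ D ∈ P, (G.induce (D : Set V)).Connected)

/-- A district-partition is *satisfying* for the preferred candidate `p` if `p` wins strictly
more districts than any other candidate leads. -/
def SatisfyingFor {V C : Type*} (χ : V → C) (p : C) (P : Finset (Finset V)) : Prop :=
  ∀ q : C, q ≠ p →
    (P.filter fun D => leadsIn χ q D).card < (P.filter fun D => winsIn χ p D).card

/-- Vertices of the depth-2 gerrymandering instance: the root `r`, weight-branch vertices
`w_i, w'_i` for `i ∈ [d]`, set-branch vertices `s_i, s'_i` for `i ∈ [m]`, and element leaves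
`v^j_l` for `j ∈ [n]`, `l ∈ [d]`. -/
inductive V2 (n m d : ℕ) : Type where
  | root
  | w (i : Fin d)
  | w' (i : Fin d)
  | s (i : Fin m)
  | s' (i : Fin m)
  | v (j : Fin n) (l : Fin d)
  deriving DecidableEq, Fintype

/-- Candidates of the depth-2 instance: preferred candidate `p`, adversary `q`,
element candidates `a_j`, and set candidates `b_i`. -/
inductive C2 (n m : ℕ) : Type where
  | p
  | q
  | a (j : Fin n)
  | b (i : Fin m)
  deriving DecidableEq

/-- Candidate preferences of the depth-2 instance. -/
def chi2 {n m d : ℕ} : V2 n m d → C2 n m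
  | .root => .p
  | .w _ => .p
  | .w' _ => .q
  | .s i => .b i
  | .s' i => .b i
  | .v j _ => .a j

/-- The depth-2 tree: the root is adjacent to each `w_i` and each `s_i`; `w'_i` is attached to
`w_i`; `s'_i` is attached to `s_i`; and the leaf `v^j_l` is attached to `s_{att j l}`, where
`att j` enumerates (bijectively) the sets containing element `e_j`. -/
def G2 {n m d : ℕ} (att : Fin n → Fin d → Fin m) : SimpleGraph (V2 n m d) :=
  SimpleGraph.fromRel (fun x y =>
    (x = V2.root ∧ ∃ i, y = V2.w i) ∨
    (∃ i, x = V2.w i ∧ y = V2.w' i) ∨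
    (x = V2.root ∧ ∃ i, y = V2.s i) ∨
    (∃ i, x = V2.s i ∧ y = V2.s' i) ∨
    (∃ j l, x = V2.s (att j l) ∧ y = V2.v j l))

/-!
Given a cover, pad it to `t` sets `X` and cut the tree into `{w i0}`, `{w' i0}`, the branch of
`s i` for each `i ∈ X`, and a root district holding everything else. Each district is won by the
candidate of its top vertex: `p` has `d` votes in the root district while every other candidate
has at most `d - 1` there (`b i` has two, and each `a j` has lost a leaf to a branch of `X`), and
`b i` beats every `a j` in its branch 2 to 1. So `p` wins two districts and every other candidate
leads at most one.

Conversely, a district avoiding the root lies inside a single branch. Each weight branch whose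
`w i` lies outside the root district `R` yields a district led by `q`, while every district won
by `p` other than `R` contains such a `w i`. Hence `p` wins `R`, and some `w i` lies outside `R`
(else `p` wins `R` only, while any other district has a leader other than `p`). Then `p` has at
most `d` votes in `R`, so every element `e j` has a leaf outside `R`. The districts of these
leaves lie in set branches and avoid three districts (two won by `p`, one led by `q`), so there
are at most `t` of them, and the sets of their branches cover `U`.
-/

open Finset

theorem Finset.card_image_le_of_factorsThrough {ι α β : Type*} [DecidableEq α] [DecidableEq β]
    {s : Finset ι} {f : ι → α} {g : ι → β} (h : f.FactorsThrough g) :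
    #(s.image f) ≤ #(s.image g) := by
  rcases s.eq_empty_or_nonempty with rfl | ⟨a, -⟩
  · simp
  calc #(s.image f) = #((s.image g).image (Function.extend g f fun _ => f a)) := by
        rw [image_image]
        exact congrArg card (image_congr fun x _ => (h.extend_apply _ x).symm)
    _ ≤ #(s.image g) := card_image_le

namespace SimpleGraph

variable {V : Type*} {G : SimpleGraph V}

theorem Reachable.eq_of_forall_adj {β : Type*} {f : V → β}
    (hf : ∀ x y, G.Adj x y → f x = f y) {u v : V} (h : G.Reachable u v) : f u = f v := by
  obtain ⟨p⟩ := h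
  induction p with
  | nil => rfl
  | cons hadj _ ih => exact (hf _ _ hadj).trans ih

theorem Connected.induce_eq_of_forall_adj {s : Set V} (hs : (G.induce s).Connected) {β : Type*}
    {f : V → β} (hf : ∀ x ∈ s, ∀ y ∈ s, G.Adj x y → f x = f y) {x y : V} (hx : x ∈ s)
    (hy : y ∈ s) : f x = f y :=
  (hs.preconnected ⟨x, hx⟩ ⟨y, hy⟩).eq_of_forall_adj (f := f ∘ Subtype.val)
    fun a b hab => hf _ a.2 _ b.2 hab

theorem Connected.induce_exists_adj {s : Set V} (hs : (G.induce s).Connected) {x y : V}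
    (hx : x ∈ s) (hy : y ∈ s) (hxy : x ≠ y) : ∃ z ∈ s, G.Adj x z := by
  have : Nontrivial s := ⟨⟨⟨x, hx⟩, ⟨y, hy⟩, by simpa using hxy⟩⟩
  obtain ⟨⟨z, hz⟩, hadj⟩ := hs.preconnected.exists_adj_of_nontrivial ⟨x, hx⟩
  exact ⟨z, hz, hadj⟩

theorem induce_connected_of_descent {s : Set V} {h : V} (hh : h ∈ s) (parent : V → V)
    (depth : V → ℕ)
    (hpar : ∀ x ∈ s, x ≠ h → parent x ∈ s ∧ G.Adj x (parent x) ∧ depth (parent x) < depth x) :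
    (G.induce s).Connected := by
  have reach : ∀ x (hx : x ∈ s), (G.induce s).Reachable ⟨x, hx⟩ ⟨h, hh⟩ := by
    intro x
    induction hn : depth x using Nat.strong_induction_on generalizing x with
    | _ n ih =>
      intro hx
      by_cases hxh : x = h
      · subst hxh; rfl
      obtain ⟨hps, hadj, hlt⟩ := hpar x hx hxh
      exact (Adj.reachable (G := G.induce s) (u := ⟨x, hx⟩) (v := ⟨parent x, hps⟩) hadj).trans
        (ih _ (hn ▸ hlt) _ rfl hps)
  rw [connected_iff_exists_forall_reachable]
  exact ⟨⟨h, hh⟩, fun x => (reach x.1 x.2).symm⟩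

end SimpleGraph

namespace IsDistrictPartition

variable {V : Type*} {G : SimpleGraph V} {k : ℕ} {P : Finset (Finset V)}

theorem eq_of_mem (hP : IsDistrictPartition G k P) {D D' : Finset V} {x : V} (hD : D ∈ P)
    (hD' : D' ∈ P) (hx : x ∈ D) (hx' : x ∈ D') : D = D' :=
  by_contra fun hne => disjoint_left.1 (hP.2.2.1 D hD D' hD' hne) hx hx'

variable [Fintype V] [DecidableEq V]

noncomputable def toFinpartition (hP : IsDistrictPartition G k P) :
    Finpartition (univ : Finset V) :=
  .ofExistsUnique P (fun _ _ => subset_univ _)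
    (fun x _ => (hP.2.2.2.1 x).elim fun D hD =>
      ⟨D, hD, fun _ hD' => hP.eq_of_mem hD'.1 hD.1 hD'.2 hD.2⟩)
    (fun h => not_nonempty_empty (hP.2.1 _ h))

theorem part_mem (hP : IsDistrictPartition G k P) (x : V) : hP.toFinpartition.part x ∈ P :=
  hP.toFinpartition.part_mem.2 (mem_univ x)

theorem mem_part (hP : IsDistrictPartition G k P) (x : V) : x ∈ hP.toFinpartition.part x :=
  hP.toFinpartition.mem_part (mem_univ x)

theorem part_eq_of_mem (hP : IsDistrictPartition G k P) {D : Finset V} {x : V} (hD : D ∈ P)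
    (hx : x ∈ D) : hP.toFinpartition.part x = D :=
  hP.toFinpartition.part_eq_of_mem hD hx

theorem mem_part_comm (hP : IsDistrictPartition G k P) {x y : V} :
    x ∈ hP.toFinpartition.part y ↔ y ∈ hP.toFinpartition.part x :=
  ⟨fun h => hP.part_eq_of_mem (hP.part_mem y) h ▸ hP.mem_part y,
    fun h => hP.part_eq_of_mem (hP.part_mem x) h ▸ hP.mem_part x⟩

end IsDistrictPartition

theorem isDistrictPartition_image_fiber {V β : Type*} [Fintype V] [DecidableEq V] [DecidableEq β]
    {G : SimpleGraph V} (f : V → β) (hconn : ∀ x, (G.induce {y | f y = f x}).Connected) :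
    IsDistrictPartition G #(univ.image f) (univ.image fun x => ({y | f y = f x} : Finset V)) := by
  have fiber_eq : ∀ {x x'}, ({y | f y = f x} : Finset V) = ({y | f y = f x'} : Finset V) →
      f x = f x' :=
    fun {x x'} h => by simpa using (Finset.ext_iff.1 h x).1 (by simp)
  refine ⟨?_, ?_, ?_, fun x => ⟨_, mem_image_of_mem _ (mem_univ x), by simp⟩, ?_⟩
  · have : univ.image (fun x => ({y | f y = f x} : Finset V)) =
        (univ.image f).image fun b => ({y | f y = b} : Finset V) := by
      rw [image_image]; rfl
    rw [this]
    refine card_image_of_injOn ?_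
    rintro _ hb _ hb' h
    obtain ⟨x, -, rfl⟩ := mem_image.1 hb
    obtain ⟨x', -, rfl⟩ := mem_image.1 hb'
    exact fiber_eq h
  · intro D hD
    obtain ⟨x, -, rfl⟩ := mem_image.1 hD
    exact ⟨x, by simp⟩
  · intro D hD D' hD' hne
    obtain ⟨x, -, rfl⟩ := mem_image.1 hD
    obtain ⟨x', -, rfl⟩ := mem_image.1 hD'
    refine disjoint_left.2 fun y hy hy' => hne ?_
    simp only [mem_filter, mem_univ, true_and] at hy hy'
    simp only [← hy, ← hy']
  · intro D hD
    obtain ⟨x, -, rfl⟩ := mem_image.1 hD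
    have hcoe : (({y | f y = f x} : Finset V) : Set V) = {y | f y = f x} := by ext; simp
    exact hcoe ▸ hconn x

section Votes

variable {V C : Type*} {χ : V → C} {c c' : C} {D : Finset V} {x : V}

noncomputable def votes (χ : V → C) (c : C) (D : Finset V) : ℕ := #{x ∈ D | χ x = c}

theorem le_votes {T : Finset V} (hT : T ⊆ D) (hc : ∀ x ∈ T, χ x = c) : #T ≤ votes χ c D :=
  card_le_card fun x hx => mem_filter.2 ⟨hT hx, hc x hx⟩

theorem votes_le {T : Finset V} (hT : ∀ x ∈ D, χ x = c → x ∈ T) : votes χ c D ≤ #T :=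
  card_le_card fun x hx => hT x (mem_filter.1 hx).1 (mem_filter.1 hx).2

theorem votes_pos (hx : x ∈ D) : 0 < votes χ (χ x) D :=
  card_pos.2 ⟨x, mem_filter.2 ⟨hx, rfl⟩⟩

theorem votes_le_one (h : ∀ x ∈ D, ∀ y ∈ D, χ x = c → χ y = c → x = y) : votes χ c D ≤ 1 :=
  card_le_one.2 fun _ hx _ hy =>
    h _ (mem_filter.1 hx).1 _ (mem_filter.1 hy).1 (mem_filter.1 hx).2 (mem_filter.1 hy).2

theorem leadsIn_of_injOn (h : Set.InjOn χ D) (hx : x ∈ D) : leadsIn χ (χ x) D :=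
  fun _ => (votes_le_one fun _ ha _ hb hac hbc => h ha hb (hac.trans hbc.symm)).trans
    (votes_pos hx)

theorem winsIn_singleton (x : V) : winsIn χ (χ x) {x} := by
  intro c' hc'
  have : votes χ c' {x} = 0 := by
    simp [votes, filter_singleton, Ne.symm hc']
  show votes χ c' {x} < votes χ (χ x) {x}
  exact this ▸ votes_pos (mem_singleton_self x)

theorem leadsIn_iff_of_winsIn (h : winsIn χ c D) : leadsIn χ c' D ↔ c' = c := by
  refine ⟨fun hc' => by_contra fun hne => (h c' hne).not_ge (hc' c), ?_⟩
  rintro rfl c''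
  by_cases hc'' : c'' = c'
  · rw [hc'']
  · exact (h c'' hc'').le

theorem exists_mem_of_winsIn (h : winsIn χ c D) (hD : D.Nonempty) : ∃ x ∈ D, χ x = c := by
  obtain ⟨x, hx⟩ := hD
  by_cases hxc : χ x = c
  · exact ⟨x, hx, hxc⟩
  · obtain ⟨y, hy⟩ := card_pos.1 ((votes_pos hx).trans (h _ hxc))
    exact ⟨y, (mem_filter.1 hy).1, (mem_filter.1 hy).2⟩

theorem exists_leadsIn (hD : D.Nonempty) : ∃ x ∈ D, leadsIn χ (χ x) D := by
  obtain ⟨x, hx, hmax⟩ := exists_max_image D (fun x => votes χ (χ x) D) hD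
  refine ⟨x, hx, fun c' => show votes χ c' D ≤ votes χ (χ x) D from ?_⟩
  by_cases h : ∃ y ∈ D, χ y = c'
  · obtain ⟨y, hy, rfl⟩ := h
    exact hmax y hy
  · have : votes χ c' D = 0 := card_eq_zero.2 (filter_eq_empty_iff.2 fun y hy hyc => h ⟨y, hy, hyc⟩)
    omega

theorem satisfyingFor_of_forall_leadsIn_eq {P : Finset (Finset V)} {p : C} {D₁ D₂ : Finset V}
    (h₁ : D₁ ∈ P) (h₂ : D₂ ∈ P) (hne : D₁ ≠ D₂) (hw₁ : winsIn χ p D₁) (hw₂ : winsIn χ p D₂)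
    (hlead : ∀ c ≠ p, ∀ D ∈ P, ∀ D' ∈ P, leadsIn χ c D → leadsIn χ c D' → D = D') :
    SatisfyingFor χ p P := by
  intro c hc
  calc #{D ∈ P | leadsIn χ c D} ≤ 1 :=
        card_le_one.2 fun D hD D' hD' =>
          hlead c hc D (mem_filter.1 hD).1 D' (mem_filter.1 hD').1 (mem_filter.1 hD).2
            (mem_filter.1 hD').2
    _ < #{D ∈ P | winsIn χ p D} :=
        one_lt_card.2 ⟨D₁, mem_filter.2 ⟨h₁, hw₁⟩, D₂, mem_filter.2 ⟨h₂, hw₂⟩, hne⟩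

end Votes

namespace V2

variable {n m d : ℕ} {att : Fin n → Fin d → Fin m}

def parent (att : Fin n → Fin d → Fin m) : V2 n m d → V2 n m d
  | root => root
  | w _ => root
  | w' i => w i
  | s _ => root
  | s' i => s i
  | v j l => s (att j l)

def depth : V2 n m d → ℕ
  | root => 0
  | w _ => 1
  | s _ => 1
  | _ => 2

/-- The child of the root on the path from `x` to the root (the root itself for `x = root`). -/
def branch (att : Fin n → Fin d → Fin m) : V2 n m d → V2 n m d
  | w' i => w i
  | s' i => s i
  | v j l => s (att j l)
  | x => x

theorem depth_parent_lt {x : V2 n m d} (hx : x ≠ root) : depth (parent att x) < depth x := by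
  cases x <;> simp_all [parent, depth]

theorem branch_parent {x : V2 n m d} (hx : parent att x ≠ root) :
    branch att (parent att x) = branch att x := by
  cases x <;> simp_all [parent, branch]

theorem parent_ne_w' (x : V2 n m d) (i : Fin d) : parent att x ≠ w' i := by
  cases x <;> simp [parent]

end V2

open V2

theorem G2_adj_iff {n m d : ℕ} {att : Fin n → Fin d → Fin m} {x y : V2 n m d} :
    (G2 att).Adj x y ↔ x ≠ root ∧ parent att x = y ∨ y ≠ root ∧ parent att y = x := by
  cases x <;> cases y <;> simp [G2, parent, eq_comm]

section Tree

variable {n m d : ℕ} {att : Fin n → Fin d → Fin m} {x y : V2 n m d}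

theorem G2_adj_parent (hx : x ≠ root) : (G2 att).Adj x (parent att x) :=
  G2_adj_iff.2 (.inl ⟨hx, rfl⟩)

theorem branch_eq_of_G2_adj (h : (G2 att).Adj x y) (hx : x ≠ root) (hy : y ≠ root) :
    branch att x = branch att y := by
  rcases G2_adj_iff.1 h with ⟨-, rfl⟩ | ⟨-, rfl⟩
  exacts [(branch_parent hy).symm, branch_parent hx]

theorem eq_w_of_G2_adj_w' {i : Fin d} (h : (G2 att).Adj (w' i) y) : y = w i := by
  rcases G2_adj_iff.1 h with ⟨-, rfl⟩ | ⟨-, h⟩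
  exacts [rfl, absurd h (parent_ne_w' y i)]

end Tree

namespace V2

variable {n m d : ℕ}

/-- The districts of the partition built from a cover `X`: `{w i0}`, `{w' i0}`, for each `i ∈ X`
the branch of `s i`, and the root district holding everything else. `hub x` is the top vertex of
the district of `x`. -/
def hub (att : Fin n → Fin d → Fin m) (X : Finset (Fin m)) (i0 : Fin d) : V2 n m d → V2 n m d
  | root => root
  | w i => if i = i0 then w i0 else root
  | w' i => if i = i0 then w' i0 else root
  | s i => if i ∈ X then s i else root
  | s' i => if i ∈ X then s i else root
  | v j l => if att j l ∈ X then s (att j l) else root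

variable {att : Fin n → Fin d → Fin m} {X : Finset (Fin m)} {i0 : Fin d} {x y : V2 n m d}

theorem hub_hub : hub att X i0 (hub att X i0 x) = hub att X i0 x := by
  cases x <;> simp only [hub] <;> split_ifs <;> simp_all

theorem hub_parent (hx : hub att X i0 x ≠ x) :
    x ≠ root ∧ hub att X i0 (parent att x) = hub att X i0 x := by
  cases x <;> simp_all [hub, parent] <;> split_ifs at * <;> simp_all

theorem hub_cases (x : V2 n m d) :
    hub att X i0 x = w i0 ∨ hub att X i0 x = w' i0 ∨ hub att X i0 x = root ∨
      ∃ i ∈ X, hub att X i0 x = s i := by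
  cases x <;> simp only [hub] <;> (try split_ifs) <;> simp_all [exists_eq_right']

theorem image_hub : univ.image (hub att X i0) = {w i0, w' i0, root} ∪ X.image s := by
  ext y
  simp only [mem_image, mem_univ, true_and, mem_union, mem_insert, mem_singleton]
  constructor
  · rintro ⟨x, rfl⟩
    rcases hub_cases (att := att) (X := X) (i0 := i0) x with h | h | h | ⟨i, hi, h⟩
    · simp [h]
    · simp [h]
    · simp [h]
    · exact .inr ⟨i, hi, h.symm⟩
  · rintro ((rfl | rfl | rfl) | ⟨i, hi, rfl⟩)
    exacts [⟨w i0, by simp [hub]⟩, ⟨w' i0, by simp [hub]⟩, ⟨root, rfl⟩, ⟨s i, by simp [hub, hi]⟩]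

theorem card_image_hub : #(univ.image (hub att X i0)) = #X + 3 := by
  rw [image_hub, card_union_of_disjoint (by simp [disjoint_left]),
    card_image_of_injective _ fun _ _ h => s.inj h]
  simp [add_comm]

end V2

section Forward

variable {n m d : ℕ} {att : Fin n → Fin d → Fin m} {X : Finset (Fin m)} {i0 : Fin d}
  {x y : V2 n m d}

theorem winsIn_p_hub_root (hd : 3 ≤ d) (hX : ∀ j, ∃ l, att j l ∈ X) :
    winsIn chi2 .p ({y | hub att X i0 y = root} : Finset (V2 n m d)) := by
  set R : Finset (V2 n m d) := {y | hub att X i0 y = root}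
  have mem_R {y : V2 n m d} : y ∈ R ↔ hub att X i0 y = root := by simp [R]
  have card_erase_image {α : Type} [DecidableEq α] (f : Fin d → α) (l : Fin d) :
      #((univ.erase l).image f) < d :=
    card_image_le.trans_lt (by simpa using l.pos)
  have hp : d ≤ votes chi2 .p R := by
    calc d = #(insert root ((univ.erase i0).image w)) := by
          rw [card_insert_of_notMem (by simp), card_image_of_injective _ fun _ _ h => w.inj h,
            card_erase_of_mem (mem_univ _), card_univ, Fintype.card_fin]
          have := i0.pos
          omega
      _ ≤ votes chi2 .p R := le_votes (fun y hy => by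
          rcases mem_insert.1 hy with rfl | hy
          · exact mem_R.2 rfl
          · obtain ⟨i, hi, rfl⟩ := mem_image.1 hy
            simp_all [hub]) (by simp [chi2])
  intro c hc
  refine lt_of_lt_of_le ?_ hp
  cases c with
  | p => contradiction
  | q =>
    refine (votes_le (T := (univ.erase i0).image w') fun y hy hyc => ?_).trans_lt
      (card_erase_image _ _)
    cases y <;> simp_all [hub, chi2]
  | a j =>
    obtain ⟨l0, hl0⟩ := hX j
    refine (votes_le (T := (univ.erase l0).image (v j)) fun y hy hyc => ?_).trans_lt
      (card_erase_image _ _)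
    cases y with
    | v j' l =>
      obtain rfl : j' = j := by simpa [chi2] using hyc
      simp only [mem_R, hub, ite_eq_right_iff, reduceCtorEq, imp_false] at hy
      exact mem_image_of_mem _ (mem_erase.2 ⟨fun h => hy (h ▸ hl0), mem_univ _⟩)
    | _ => simp [chi2] at hyc
  | b i =>
    refine (votes_le (T := {s i, s' i}) fun y hy hyc => ?_).trans_lt (card_le_two.trans_lt hd)
    cases y <;> simp_all [chi2]

theorem hub_eq_s_iff {i : Fin m} (hi : i ∈ X) : hub att X i0 y = s i ↔ branch att y = s i := by
  cases y <;> simp only [hub, branch] <;> split_ifs <;> grind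

theorem winsIn_b_hub_s (hattinj : ∀ j, Function.Injective (att j)) {i : Fin m} (hi : i ∈ X) :
    winsIn chi2 (.b i) ({y | hub att X i0 y = s i} : Finset (V2 n m d)) := by
  set Si : Finset (V2 n m d) := {y | hub att X i0 y = s i}
  have mem_Si {y : V2 n m d} : y ∈ Si ↔ branch att y = s i := by simp [Si, hub_eq_s_iff hi]
  have hb : 2 ≤ votes chi2 (.b i) Si := by
    calc 2 = #({s i, s' i} : Finset (V2 n m d)) := by simp
      _ ≤ votes chi2 (.b i) Si := le_votes (by simp [insert_subset_iff, mem_Si, branch])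
          (by simp [chi2])
  intro c hc
  refine lt_of_lt_of_le (Nat.lt_succ_of_le (votes_le_one fun y hy z hz hyc hzc => ?_)) hb
  subst hyc
  rw [mem_Si] at hy hz
  cases y <;> cases z <;> simp_all [branch, chi2]
  exact hattinj _ (hy.trans hz.symm)

theorem hub_eq_w_iff : hub att X i0 y = w i0 ↔ y = w i0 := by
  cases y <;> simp [hub] <;> split_ifs <;> simp_all

theorem hub_eq_w'_iff : hub att X i0 y = w' i0 ↔ y = w' i0 := by
  cases y <;> simp [hub] <;> split_ifs <;> simp_all

theorem winsIn_hub_fiber (hd : 3 ≤ d) (hattinj : ∀ j, Function.Injective (att j))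
    (hX : ∀ j, ∃ l, att j l ∈ X) (x : V2 n m d) :
    winsIn chi2 (chi2 (hub att X i0 x))
      ({y | hub att X i0 y = hub att X i0 x} : Finset (V2 n m d)) := by
  rcases hub_cases (att := att) (X := X) (i0 := i0) x with h | h | h | ⟨i, hi, h⟩ <;> rw [h]
  · have : ({y | hub att X i0 y = w i0} : Finset (V2 n m d)) = {w i0} := by
      ext; simp [hub_eq_w_iff]
    exact this ▸ winsIn_singleton _
  · have : ({y | hub att X i0 y = w' i0} : Finset (V2 n m d)) = {w' i0} := by
      ext; simp [hub_eq_w'_iff]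
    exact this ▸ winsIn_singleton _
  · exact winsIn_p_hub_root hd hX
  · exact winsIn_b_hub_s hattinj hi

theorem hub_eq_of_chi2_hub_eq (h : chi2 (hub att X i0 x) = chi2 (hub att X i0 y))
    (hp : chi2 (hub att X i0 x) ≠ .p) : hub att X i0 x = hub att X i0 y := by
  rcases hub_cases (att := att) (X := X) (i0 := i0) x with hx | hx | hx | ⟨i, hi, hx⟩ <;>
    rcases hub_cases (att := att) (X := X) (i0 := i0) y with hy | hy | hy | ⟨i', hi', hy⟩ <;>
    simp_all [chi2]

theorem G2_induce_hub_fiber_connected (x : V2 n m d) :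
    ((G2 att).induce {y | hub att X i0 y = hub att X i0 x}).Connected :=
  SimpleGraph.induce_connected_of_descent (h := hub att X i0 x) hub_hub (parent att) depth
    fun y hy hne => by
      obtain ⟨hy0, hpar⟩ := hub_parent (x := y) fun h => hne (h.symm.trans hy)
      exact ⟨hpar.trans hy, G2_adj_parent hy0, depth_parent_lt hy0⟩

theorem exists_satisfying_of_forall_exists_att_mem (hd : 3 ≤ d)
    (hattinj : ∀ j, Function.Injective (att j)) {X : Finset (Fin m)}
    (hX : ∀ j, ∃ l, att j l ∈ X) :
    ∃ P, IsDistrictPartition (G2 att) (#X + 3) P ∧ SatisfyingFor chi2 .p P := by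
  obtain ⟨i0⟩ : Nonempty (Fin d) := ⟨⟨0, by omega⟩⟩
  have hwins := winsIn_hub_fiber (i0 := i0) hd hattinj hX
  refine ⟨univ.image fun x => ({y | hub att X i0 y = hub att X i0 x} : Finset _),
    card_image_hub ▸ isDistrictPartition_image_fiber _ G2_induce_hub_fiber_connected, ?_⟩
  have hw : chi2 (hub att X i0 (w i0)) = .p := by simp [hub, chi2]
  refine satisfyingFor_of_forall_leadsIn_eq (mem_image_of_mem _ (mem_univ (w i0)))
    (mem_image_of_mem _ (mem_univ root)) ?_ (hw ▸ hwins _) (hwins root) ?_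
  · intro h
    have := (Finset.ext_iff.1 h root).2
    simp only [mem_filter, mem_univ, true_and] at this
    simp [hub] at this
  · intro c hc D hD D' hD' hlead hlead'
    obtain ⟨x, -, rfl⟩ := mem_image.1 hD
    obtain ⟨x', -, rfl⟩ := mem_image.1 hD'
    have hcx := (leadsIn_iff_of_winsIn (hwins x)).1 hlead
    have hcx' := (leadsIn_iff_of_winsIn (hwins x')).1 hlead'
    rw [hub_eq_of_chi2_hub_eq (hcx.symm.trans hcx') (hcx ▸ hc)]

end Forward

theorem exists_att_eq {n m d : ℕ} {att : Fin n → Fin d → Fin m} {S : Fin m → Finset (Fin n)}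
    (hfreq : ∀ j : Fin n, #{i | j ∈ S i} = d) (hattmem : ∀ j l, j ∈ S (att j l))
    (hattinj : ∀ j, Function.Injective (att j)) {j : Fin n} {i : Fin m} (h : j ∈ S i) :
    ∃ l, att j l = i := by
  obtain ⟨l, -, hl⟩ := surjOn_of_injOn_of_card_le (s := univ) (t := {i | j ∈ S i}) (att j)
    (fun l _ => by simp [hattmem]) (hattinj j).injOn (by simp [hfreq]) (by simpa using h)
  exact ⟨l, hl⟩

section Backward

variable {n m d k : ℕ} {att : Fin n → Fin d → Fin m} {P : Finset (Finset (V2 n m d))}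
  {D : Finset (V2 n m d)} {i : Fin d}

theorem branch_eq_of_mem (hP : IsDistrictPartition (G2 att) k P) (hD : D ∈ P) (hr : root ∉ D)
    {x y : V2 n m d} (hx : x ∈ D) (hy : y ∈ D) : branch att x = branch att y :=
  (hP.2.2.2.2 D hD).induce_eq_of_forall_adj
    (fun _ ha _ hb hab => branch_eq_of_G2_adj hab (fun h => hr (h ▸ ha)) (fun h => hr (h ▸ hb)))
    hx hy

theorem w_mem_of_w'_mem (hP : IsDistrictPartition (G2 att) k P) (hD : D ∈ P) (hr : root ∈ D)
    (h : w' i ∈ D) : w i ∈ D := by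
  obtain ⟨z, hz, hadj⟩ := (hP.2.2.2.2 D hD).induce_exists_adj (x := w' i) h hr (by simp)
  rwa [← eq_w_of_G2_adj_w' hadj]

theorem part_w'_subset (hP : IsDistrictPartition (G2 att) k P)
    (hi : w i ∉ hP.toFinpartition.part root) :
    hP.toFinpartition.part (w' i) ⊆ {w i, w' i} := by
  have hr : root ∉ hP.toFinpartition.part (w' i) := fun hr =>
    hi (w_mem_of_w'_mem hP (hP.part_mem _) (hP.mem_part _) (hP.mem_part_comm.1 hr))
  intro y hy
  have := branch_eq_of_mem hP (hP.part_mem _) hr hy (hP.mem_part _)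
  cases y <;> simp_all [branch]

theorem leadsIn_q_part_w' (hP : IsDistrictPartition (G2 att) k P)
    (hi : w i ∉ hP.toFinpartition.part root) :
    leadsIn chi2 .q (hP.toFinpartition.part (w' i)) := by
  refine leadsIn_of_injOn (fun _ ha _ hb hab => ?_) (x := w' i) (hP.mem_part _)
  have ha := part_w'_subset hP hi ha
  have hb := part_w'_subset hP hi hb
  simp only [mem_insert, mem_singleton] at ha hb
  rcases ha with rfl | rfl <;> rcases hb with rfl | rfl <;> simp_all [chi2]

theorem eq_part_of_winsIn (hP : IsDistrictPartition (G2 att) k P) (hD : D ∈ P)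
    (hw : winsIn chi2 .p D) :
    D = hP.toFinpartition.part root ∨
      ∃ i, w i ∉ hP.toFinpartition.part root ∧ D = hP.toFinpartition.part (w i) := by
  obtain ⟨y, hy, hyp⟩ := exists_mem_of_winsIn hw (hP.2.1 D hD)
  have hDy := (hP.part_eq_of_mem hD hy).symm
  cases y with
  | root => exact .inl hDy
  | w i =>
    by_cases hi : w i ∈ hP.toFinpartition.part root
    · exact .inl (hDy.trans (hP.part_eq_of_mem (hP.part_mem _) hi))
    · exact .inr ⟨i, hi, hDy⟩
  | _ => simp [chi2] at hyp

theorem card_lt_card_won (hP : IsDistrictPartition (G2 att) k P) (hS : SatisfyingFor chi2 .p P) :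
    #{i | w i ∉ hP.toFinpartition.part root} < #{D ∈ P | winsIn chi2 .p D} := by
  set K : Finset (Fin d) := {i | w i ∉ hP.toFinpartition.part root}
  calc #K = #(K.image fun i => hP.toFinpartition.part (w' i)) := by
        refine (card_image_of_injOn fun i hi i' hi' h => ?_).symm
        have := part_w'_subset hP (mem_filter.1 hi).2 (h ▸ hP.mem_part (w' i'))
        simp only [mem_insert, mem_singleton, reduceCtorEq, w'.injEq, false_or] at this
        exact this.symm
    _ ≤ #{D ∈ P | leadsIn chi2 .q D} := card_le_card fun D hD => by
        obtain ⟨i, hi, rfl⟩ := mem_image.1 hD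
        exact mem_filter.2 ⟨hP.part_mem _, leadsIn_q_part_w' hP (mem_filter.1 hi).2⟩
    _ < #{D ∈ P | winsIn chi2 .p D} := hS .q (by simp)

theorem exists_w_notMem_part_root (hP : IsDistrictPartition (G2 att) k P) (hk : 2 ≤ k)
    (hS : SatisfyingFor chi2 .p P) : ∃ i, w i ∉ hP.toFinpartition.part root := by
  by_contra! hw
  set Dr := hP.toFinpartition.part root
  have hW : #{D ∈ P | winsIn chi2 .p D} ≤ 1 := by
    refine card_le_one_iff_subset_singleton.2 ⟨Dr, fun D hD => ?_⟩
    obtain ⟨hD, hwin⟩ := mem_filter.1 hD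
    rcases eq_part_of_winsIn hP hD hwin with rfl | ⟨i, hi, -⟩
    exacts [mem_singleton_self _, absurd (hw i) hi]
  obtain ⟨D, hD, hDr⟩ := exists_mem_ne (hP.1 ▸ hk : 1 < #P) Dr
  obtain ⟨x, hx, hlead⟩ := exists_leadsIn (hP.2.1 D hD)
  have hxp : chi2 x ≠ .p := by
    intro hxp
    have hxDr : x ∈ Dr := by
      cases x with
      | root => exact hP.mem_part _
      | w i => exact hw i
      | _ => simp [chi2] at hxp
    exact hDr (hP.eq_of_mem hD (hP.part_mem _) hx hxDr)
  have := hS _ hxp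
  have : 0 < #{D ∈ P | leadsIn chi2 (chi2 x) D} := card_pos.2 ⟨D, mem_filter.2 ⟨hD, hlead⟩⟩
  omega

theorem winsIn_part_root (hP : IsDistrictPartition (G2 att) k P) (hS : SatisfyingFor chi2 .p P) :
    winsIn chi2 .p (hP.toFinpartition.part root) := by
  by_contra hr
  set K : Finset (Fin d) := {i | w i ∉ hP.toFinpartition.part root}
  refine (card_lt_card_won hP hS).not_ge <|
    (card_le_card (t := K.image fun i => hP.toFinpartition.part (w i)) fun D hD => ?_).trans
      card_image_le
  obtain ⟨hD, hwin⟩ := mem_filter.1 hD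
  rcases eq_part_of_winsIn hP hD hwin with rfl | ⟨i, hi, rfl⟩
  exacts [absurd hwin hr, mem_image_of_mem _ (mem_filter.2 ⟨mem_univ _, hi⟩)]

theorem exists_v_notMem_part_root (hP : IsDistrictPartition (G2 att) k P) (hk : 2 ≤ k)
    (hS : SatisfyingFor chi2 .p P) (j : Fin n) : ∃ l, v j l ∉ hP.toFinpartition.part root := by
  by_contra! hv
  set Dr := hP.toFinpartition.part root
  obtain ⟨i0, hi0⟩ := exists_w_notMem_part_root hP hk hS
  have ha : d ≤ votes chi2 (.a j) Dr := by
    calc d = #(univ.image (v j)) := by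
          rw [card_image_of_injective _ fun _ _ h => (v.inj h).2, card_univ, Fintype.card_fin]
      _ ≤ votes chi2 (.a j) Dr := le_votes (by simpa [subset_iff] using hv) (by simp [chi2])
  have hp : votes chi2 .p Dr ≤ d := by
    calc votes chi2 .p Dr ≤ #(insert root (({i | w i ∈ Dr} : Finset (Fin d)).image w)) :=
          votes_le fun y hy hyp => by cases y <;> simp_all [chi2]
      _ ≤ #({i | w i ∈ Dr} : Finset (Fin d)) + 1 := card_insert_le _ _ |>.trans
          (Nat.add_le_add_right card_image_le 1)
      _ ≤ d := by
          have : #({i | w i ∈ Dr} : Finset (Fin d)) < #(univ : Finset (Fin d)) :=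
            card_lt_card (filter_ssubset.2 ⟨i0, mem_univ _, hi0⟩)
          simp only [card_univ, Fintype.card_fin] at this
          omega
  have := winsIn_part_root hP hS (.a j) (by simp)
  change votes chi2 (.a j) Dr < votes chi2 .p Dr at this
  omega

theorem not_winsIn_part_v (hP : IsDistrictPartition (G2 att) k P) {j : Fin n} {l : Fin d}
    (hl : v j l ∉ hP.toFinpartition.part root) :
    ¬ winsIn chi2 .p (hP.toFinpartition.part (v j l)) := by
  intro hwin
  have hr : root ∉ hP.toFinpartition.part (v j l) := mt hP.mem_part_comm.1 hl
  rcases eq_part_of_winsIn hP (hP.part_mem _) hwin with h | ⟨i, -, h⟩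
  · exact hr (h ▸ hP.mem_part root)
  · have := branch_eq_of_mem hP (hP.part_mem _) hr (hP.mem_part _) (h ▸ hP.mem_part (w i))
    simp [branch] at this

theorem card_image_part_v_le {t : ℕ} (hP : IsDistrictPartition (G2 att) (t + 3) P)
    (hS : SatisfyingFor chi2 .p P) {l : Fin n → Fin d}
    (hl : ∀ j, v j (l j) ∉ hP.toFinpartition.part root) :
    #(univ.image fun j => hP.toFinpartition.part (v j (l j))) ≤ t := by
  obtain ⟨i, hi⟩ := exists_w_notMem_part_root hP (by omega) hS
  set W := {D ∈ P | winsIn chi2 .p D}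
  set E := hP.toFinpartition.part (w' i)
  have hW : 2 ≤ #W := by
    have hK := card_lt_card_won hP hS
    change _ < #W at hK
    have : 0 < #({i | w i ∉ hP.toFinpartition.part root} : Finset (Fin d)) :=
      card_pos.2 ⟨i, mem_filter.2 ⟨mem_univ _, hi⟩⟩
    omega
  have hEW : E ∉ W := fun h => by
    simpa using (leadsIn_iff_of_winsIn (mem_filter.1 h).2).1 (leadsIn_q_part_w' hP hi)
  have hZ : Disjoint (univ.image fun j => hP.toFinpartition.part (v j (l j))) (insert E W) := by
    refine disjoint_left.2 fun D hD hDEW => ?_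
    obtain ⟨j, -, rfl⟩ := mem_image.1 hD
    rcases mem_insert.1 hDEW with h | h
    · have := part_w'_subset hP hi (h ▸ hP.mem_part (v j (l j)))
      simp at this
    · exact not_winsIn_part_v hP (hl j) (mem_filter.1 h).2
  have hsub : (univ.image fun j => hP.toFinpartition.part (v j (l j))) ∪ insert E W ⊆ P :=
    union_subset (image_subset_iff.2 fun j _ => hP.part_mem _)
      (insert_subset (hP.part_mem _) (filter_subset _ P))
  have := card_le_card hsub
  rw [card_union_of_disjoint hZ, card_insert_of_notMem hEW, hP.1] at this
  omega

theorem exists_forall_exists_att_mem_of_satisfyingFor {t : ℕ}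
    (hP : IsDistrictPartition (G2 att) (t + 3) P) (hS : SatisfyingFor chi2 .p P) :
    ∃ X : Finset (Fin m), #X ≤ t ∧ ∀ j, ∃ l, att j l ∈ X := by
  choose l hl using exists_v_notMem_part_root hP (by omega) hS
  refine ⟨univ.image fun j => att j (l j), ?_, fun j => ⟨l j, mem_image_of_mem _ (mem_univ j)⟩⟩
  refine (card_image_le_of_factorsThrough fun j j' h => ?_).trans (card_image_part_v_le hP hS hl)
  have := branch_eq_of_mem hP (hP.part_mem _) (mt hP.mem_part_comm.1 (hl j)) (hP.mem_part _)
    (h ▸ hP.mem_part (v j' (l j')))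
  simpa [branch] using this

end Backward

/-- the reduction of Theorem 1.  Let `(U, F, t)` be a Set Cover instance in
which every element belongs to exactly `d ≥ 3` sets.  Then there exists `X ⊆ F` with
`|X| ≤ t` and `∪_{S ∈ X} S = U` iff the depth-2 gerrymandering instance constructed from
`(U, F, t)` admits a district-partition into `k = t + 3` districts that is satisfying for the
preferred candidate `p`. -/
theorem depth2_cover_iff_gerrymander (n m d t : ℕ) (hd : 3 ≤ d) (htm : t ≤ m)
    (S : Fin m → Finset (Fin n))
    (hfreq : ∀ j : Fin n, (Finset.univ.filter fun i => j ∈ S i).card = d)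
    (att : Fin n → Fin d → Fin m)
    (hattmem : ∀ j l, j ∈ S (att j l))
    (hattinj : ∀ j, Function.Injective (att j)) :
    (∃ X : Finset (Fin m), X.card ≤ t ∧ ∀ j : Fin n, ∃ i ∈ X, j ∈ S i) ↔
      (∃ P : Finset (Finset (V2 n m d)),
        IsDistrictPartition (G2 att) (t + 3) P ∧ SatisfyingFor chi2 C2.p P) := by
  constructor
  · rintro ⟨X, hXt, hcover⟩
    obtain ⟨Y, hXY, hYt⟩ := exists_superset_card_eq hXt (by simpa using htm)
    have hY : ∀ j, ∃ l, att j l ∈ Y := fun j => by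
      obtain ⟨i, hi, hji⟩ := hcover j
      obtain ⟨l, rfl⟩ := exists_att_eq hfreq hattmem hattinj hji
      exact ⟨l, hXY hi⟩
    exact hYt ▸ exists_satisfying_of_forall_exists_att_mem hd hattinj hY
  · rintro ⟨P, hP, hS⟩
    obtain ⟨X, hXt, hX⟩ := exists_forall_exists_att_mem_of_satisfyingFor hP hS
    refine ⟨X, hXt, fun j => ?_⟩
    obtain ⟨l, hl⟩ := hX j
    exact ⟨att j l, hl, hattmem j l⟩
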